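/- Assume (H1)–(H5) and let x₀ ∈ 𝕊 satisfy ∇h(x₀)·[f₁,f₂](x₀) < 0. Let r be a drop generator with primitive drop R of period τ₀ such that 𝐒(x₀)(R(t)) ≤ 0 for every t ∈ ℝ (in particular any drop generator works when 𝐒(x₀) is negative semidefinite). Then there exists τ̄ > 0 such that for every τ ∈ (0, τ̄), setting ω := τ₀/τ and letting y be the solution of ẏ(t) = r¹(ωt) f₁(y(t)) + r²(ωt) f₂(y(t)) with y(0) = x₀, one has h(y(t)) − h(x₀) ≤ ½ ∇h(x₀)·[f₁,f₂](x₀) · (1/ω²) · Area(R)|₀^{ωt} for all t ∈ [0, τ]. -/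

import Mathlib

open MeasureTheory Set

noncomputable section

/-- `n`-dimensional Euclidean space. -/
abbrev Euc (n : ℕ) : Type := EuclideanSpace ℝ (Fin n)

/-- The Lie bracket `[f₁, f₂] := Df₂ f₁ − Df₁ f₂`. -/
def lieBracket {n : ℕ} (f₁ f₂ : Euc n → Euc n) (x : Euc n) : Euc n :=
  fderiv ℝ f₂ x (f₁ x) - fderiv ℝ f₁ x (f₂ x)

/-- Entries of the matrix `S(x)`:
`S_{ℓm}(x) = ½ ∇h(x)·(Df_ℓ(x) f_m(x) + Df_m(x) f_ℓ(x)) + f_ℓ(x)·D²h(x) f_m(x)`. -/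
def Smat {n : ℕ} (f₁ f₂ : Euc n → Euc n) (h : Euc n → ℝ) (x : Euc n) (l m : Fin 2) : ℝ :=
  (1 / 2) * fderiv ℝ h x (fderiv ℝ (![f₁, f₂] l) x (![f₁, f₂] m x)
      + fderiv ℝ (![f₁, f₂] m) x (![f₁, f₂] l x))
    + fderiv ℝ (fun y => fderiv ℝ h y (![f₁, f₂] m x)) x (![f₁, f₂] l x)

/-- The quadratic form `𝐒(x)` associated to the symmetric matrix `S(x)`. -/
def Sform {n : ℕ} (f₁ f₂ : Euc n → Euc n) (h : Euc n → ℝ) (x : Euc n) (w : Fin 2 → ℝ) : ℝ :=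
  ∑ l : Fin 2, ∑ m : Fin 2, Smat f₁ f₂ h x l m * w l * w m

/-- The singular set `𝕊 = {x ∈ C : ∇h·f₁ = ∇h·f₂ = 0}`. -/
def singSet {n : ℕ} (f₁ f₂ : Euc n → Euc n) (h : Euc n → ℝ) : Set (Euc n) :=
  {x | h x ≤ 0 ∧ fderiv ℝ h x (f₁ x) = 0 ∧ fderiv ℝ h x (f₂ x) = 0}

/-- Hypothesis (H1): `f₁, f₂` are `C²`, Lipschitz with a common constant, and
`‖f₁ x‖ + ‖f₂ x‖` is uniformly bounded. -/
def H1 {n : ℕ} (f₁ f₂ : Euc n → Euc n) : Prop :=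
  ContDiff ℝ 2 f₁ ∧ ContDiff ℝ 2 f₂ ∧
    (∃ kf : NNReal, LipschitzWith kf f₁ ∧ LipschitzWith kf f₂) ∧
    ∃ k₀ : ℝ, ∀ x, ‖f₁ x‖ + ‖f₂ x‖ ≤ k₀

/-- Hypothesis (H3): `h` is `C^{2,1}`, Lipschitz, `C = {h ≤ 0}` is nonempty and
`∇h ≠ 0` on `{h = 0}`. -/
def H3 {n : ℕ} (h : Euc n → ℝ) : Prop :=
  ContDiff ℝ 2 h ∧ (∃ M : NNReal, LipschitzWith M (iteratedFDeriv ℝ 2 h)) ∧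
    (∃ kh : NNReal, LipschitzWith kh h) ∧ (∃ x, h x ≤ 0) ∧
    ∀ x, h x = 0 → fderiv ℝ h x ≠ 0

/-- Hypothesis (H4): transversality of the Lie bracket on the singular set. -/
def H4 {n : ℕ} (f₁ f₂ : Euc n → Euc n) (h : Euc n → ℝ) : Prop :=
  ∃ α > 0, ∀ x ∈ singSet f₁ f₂ h, α < |fderiv ℝ h x (lieBracket f₁ f₂ x)|

/-- Hypothesis (H5): on the singular set, `𝐒(x)` is negative semidefinite or indefinite. -/
def H5 {n : ℕ} (f₁ f₂ : Euc n → Euc n) (h : Euc n → ℝ) : Prop :=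
  ∀ x ∈ singSet f₁ f₂ h,
    (∀ w : Fin 2 → ℝ, Sform f₁ f₂ h x w ≤ 0) ∨
      ((∃ w : Fin 2 → ℝ, Sform f₁ f₂ h x w < 0) ∧ (∃ w : Fin 2 → ℝ, 0 < Sform f₁ f₂ h x w))

/-- Hypothesis (H6): near the singular set,
`√((∇h·f₁)² + (∇h·f₂)²) ≥ d₀ · dist(x, 𝕊)`. -/
def H6 {n : ℕ} (f₁ f₂ : Euc n → Euc n) (h : Euc n → ℝ) : Prop :=
  ∃ δ > 0, ∃ d₀ > 0, ∀ x : Euc n, Metric.infDist x (singSet f₁ f₂ h) ≤ δ →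
    d₀ * Metric.infDist x (singSet f₁ f₂ h) ≤
      Real.sqrt ((fderiv ℝ h x (f₁ x)) ^ 2 + (fderiv ℝ h x (f₂ x)) ^ 2)

/-- The area swept by the planar curve `R = (R₁, R₂)` on `[a, b]`:
`Area(R)|_a^b = ½ ∫_a^b (R₂' R₁ − R₁' R₂)`. -/
def sweptArea (R₁ R₂ : ℝ → ℝ) (a b : ℝ) : ℝ :=
  (1 / 2) * ∫ s in a..b, (deriv R₂ s * R₁ s - deriv R₁ s * R₂ s)

/-- The excess swept by the planar curve `R = (R₁, R₂)` on `[0, t]`. -/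
def excess (R₁ R₂ : ℝ → ℝ) (t : ℝ) : ℝ :=
  ∑ l : Fin 2, ∑ m : Fin 2,
    ∫ s in (0:ℝ)..t,
      (∫ ξ in (0:ℝ)..s, |ξ * deriv (![R₁, R₂] l) ξ|) * |deriv (![R₁, R₂] m) s|

/-- `R = (R₁, R₂)` is a drop of period `τ₀`: a simple closed `τ₀`-periodic curve through `0`,
parameterized by arc length, with Lipschitz derivative, strictly increasing swept area on
`[0, τ₀]`, and excess controlled by the area. -/
structure IsDrop (R₁ R₂ : ℝ → ℝ) (τ₀ : ℝ) : Prop where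
  pos : 0 < τ₀
  diff₁ : Differentiable ℝ R₁
  diff₂ : Differentiable ℝ R₂
  init₁ : R₁ 0 = 0
  init₂ : R₂ 0 = 0
  unit : ∀ t, (deriv R₁ t) ^ 2 + (deriv R₂ t) ^ 2 = 1
  per₁ : Function.Periodic R₁ τ₀
  per₂ : Function.Periodic R₂ τ₀
  simple : Set.InjOn (fun t => (R₁ t, R₂ t)) (Set.Ico 0 τ₀)
  lip : ∃ L : NNReal, LipschitzWith L (deriv R₁) ∧ LipschitzWith L (deriv R₂)
  area_mono : StrictMonoOn (fun σ => sweptArea R₁ R₂ 0 σ) (Set.Icc 0 τ₀)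
  exc_le : ∃ C > 0, ∀ σ ∈ Set.Icc (0:ℝ) τ₀, excess R₁ R₂ σ ≤ C * |sweptArea R₁ R₂ 0 σ|

/-!
Let `g_l := ∇h·f_l` be the Lie derivative of `h` along `f_l`; it vanishes at `x₀ ∈ 𝕊`, so
`g_l(x) = ∇g_l(x₀)·(x - x₀) + O(|x - x₀|²)`. Along the trajectory,
`y(t) = x₀ + ω⁻¹ Σ_m R_m(ωt) f_m(x₀) + O(t²)` uniformly in `ω`, hence
`d/dt h(y) = Σ_l r_l(ωt) g_l(y) = ω⁻¹ Σ_{l,m} a_{lm} r_l(ωt) R_m(ωt) + O(t²)` with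
`a_{lm} := f_m·∇g_l(x₀)`. The symmetric part of `a` is `S(x₀)` and, by symmetry of `D²h`, its
antisymmetric part is `∇h·[f₁,f₂](x₀)`; so the main term is the derivative of
`ω⁻² (½ 𝐒(x₀)(R) + ∇h·[f₁,f₂](x₀) Area(R))` at `ωt`, and
`h(y(t)) - h(x₀) ≤ ω⁻² ∇h·[f₁,f₂](x₀) Area(R)|₀^{ωt} + O(t³)`. A drop sweeps area at least
`(ωt)³ / C`, so for `ω = τ₀/τ` large the cubic error is absorbed by half of the negative area term.
-/

open Asymptotics Filter Topology

section Calculus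

variable {E F G : Type*} [NormedAddCommGroup E] [NormedSpace ℝ E]
  [NormedAddCommGroup F] [NormedSpace ℝ F] [NormedAddCommGroup G] [NormedSpace ℝ G]

theorem norm_le_of_norm_deriv_le_mul_pow {f f' : ℝ → E} {τ C : ℝ} {k : ℕ} (h₀ : f 0 = 0)
    (hf : ∀ s ∈ Icc 0 τ, HasDerivAt f (f' s) s) (hf' : ∀ s ∈ Icc 0 τ, ‖f' s‖ ≤ C * s ^ k) :
    ∀ t ∈ Icc 0 τ, ‖f t‖ ≤ C * t ^ (k + 1) / (k + 1) := by
  have hB : ∀ s : ℝ, HasDerivAt (fun t => C * t ^ (k + 1) / (k + 1)) (C * s ^ k) s := fun s => by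
    refine (((hasDerivAt_pow (k + 1) s).const_mul C).div_const ((k : ℝ) + 1)).congr_deriv ?_
    push_cast
    field_simp
  exact image_norm_le_of_norm_deriv_right_le_deriv_boundary
    (fun s hs => (hf s hs).continuousAt.continuousWithinAt)
    (fun s hs => (hf s (Ico_subset_Icc_self hs)).hasDerivWithinAt) (by simp [h₀]) hB
    (fun s hs => hf' s (Ico_subset_Icc_self hs))

theorem norm_sum_smul_le_of_abs_le_one {ι : Type*} [Fintype ι] {c : ι → ℝ} (hc : ∀ i, |c i| ≤ 1)
    (v : ι → E) : ‖∑ i, c i • v i‖ ≤ ∑ i, ‖v i‖ :=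
  (norm_sum_le _ _).trans <| Finset.sum_le_sum fun i _ => by
    rw [norm_smul, Real.norm_eq_abs]
    exact mul_le_of_le_one_left (norm_nonneg _) (hc i)

theorem isBigO_sub_sub_fderiv_of_lipschitzOnWith {f : E → F} {x₀ : E} {s : Set E} {K : NNReal}
    (hs : s ∈ 𝓝 x₀) (hf : ∀ x ∈ s, DifferentiableAt ℝ f x)
    (hK : LipschitzOnWith K (fderiv ℝ f) s) :
    (fun x => f x - f x₀ - fderiv ℝ f x₀ (x - x₀)) =O[𝓝 x₀] fun x => ‖x - x₀‖ ^ 2 := by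
  obtain ⟨δ, hδ, hball⟩ := Metric.mem_nhds_iff.1 hs
  refine IsBigO.of_bound K ?_
  filter_upwards [Metric.ball_mem_nhds x₀ hδ] with y hy
  have hy' : ‖y - x₀‖ < δ := by rwa [← dist_eq_norm]
  have hsub : Metric.closedBall x₀ ‖y - x₀‖ ⊆ s :=
    (Metric.closedBall_subset_ball hy').trans hball
  have hx₀ : x₀ ∈ s := hball (Metric.mem_ball_self hδ)
  have key := (convex_closedBall x₀ ‖y - x₀‖).norm_image_sub_le_of_norm_hasFDerivWithin_le'
    (fun x hx => (hf x (hsub hx)).hasFDerivAt.hasFDerivWithinAt)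
    (fun x hx => (hK.norm_sub_le (hsub hx) hx₀).trans <|
      mul_le_mul_of_nonneg_left (mem_closedBall_iff_norm.1 hx) K.coe_nonneg)
    (Metric.mem_closedBall_self (norm_nonneg _)) (mem_closedBall_iff_norm.2 le_rfl)
  rw [Real.norm_eq_abs, abs_of_nonneg (by positivity)]
  linarith [key]

theorem isBigO_clm_apply_sub_sub {u : E → F →L[ℝ] G} {v : E → F} {U : E →L[ℝ] F →L[ℝ] G}
    {V : E →L[ℝ] F} {x₀ : E} (hu : HasFDerivAt u U x₀) (hv : HasFDerivAt v V x₀)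
    (hu₂ : (fun x => u x - u x₀ - U (x - x₀)) =O[𝓝 x₀] fun x => ‖x - x₀‖ ^ 2)
    (hv₂ : (fun x => v x - v x₀ - V (x - x₀)) =O[𝓝 x₀] fun x => ‖x - x₀‖ ^ 2) :
    (fun x => u x (v x) - u x₀ (v x₀) - (U (x - x₀) (v x₀) + u x₀ (V (x - x₀))))
      =O[𝓝 x₀] fun x => ‖x - x₀‖ ^ 2 := by
  have hsplit : ∀ x, u x (v x) - u x₀ (v x₀) - (U (x - x₀) (v x₀) + u x₀ (V (x - x₀)))
      = (u x - u x₀ - U (x - x₀)) (v x₀) + (u x - u x₀) (v x - v x₀)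
        + u x₀ (v x - v x₀ - V (x - x₀)) := fun x => by
    simp only [sub_apply, map_sub]
    abel
  have hcross : (fun x => (u x - u x₀) (v x - v x₀)) =O[𝓝 x₀] fun x => ‖x - x₀‖ ^ 2 := by
    refine isBoundedBilinearMap_apply.isBigO_comp.trans ?_
    simpa only [sq] using (hu.isBigO_sub.norm_norm.mul hv.isBigO_sub.norm_norm)
  simp only [hsplit]
  exact ((((ContinuousLinearMap.apply ℝ G (v x₀)).isBigO_comp _ _).trans hu₂).add hcross).add
    (((u x₀).isBigO_comp _ _).trans hv₂)

theorem lipschitzWith_fderiv_fderiv_of_iteratedFDeriv_two {f : E → F} {M : NNReal}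
    (hM : LipschitzWith M (iteratedFDeriv ℝ 2 f)) : LipschitzWith M (fderiv ℝ (fderiv ℝ f)) := by
  refine LipschitzWith.of_dist_le_mul fun x x' => ?_
  rw [dist_eq_norm]
  refine ContinuousLinearMap.opNorm_le_bound _ (by positivity) fun v => ?_
  refine ContinuousLinearMap.opNorm_le_bound _ (by positivity) fun w => ?_
  have happly : (fderiv ℝ (fderiv ℝ f) x - fderiv ℝ (fderiv ℝ f) x') v w
      = (iteratedFDeriv ℝ 2 f x - iteratedFDeriv ℝ 2 f x') ![v, w] := by
    simp [iteratedFDeriv_two_apply]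
  rw [happly]
  calc ‖(iteratedFDeriv ℝ 2 f x - iteratedFDeriv ℝ 2 f x') ![v, w]‖
      ≤ ‖iteratedFDeriv ℝ 2 f x - iteratedFDeriv ℝ 2 f x'‖ * ∏ i, ‖(![v, w] : Fin 2 → E) i‖ :=
        ContinuousMultilinearMap.le_opNorm _ _
    _ ≤ M * dist x x' * (‖v‖ * ‖w‖) := by
        rw [← dist_eq_norm, Fin.prod_univ_two]
        exact mul_le_mul_of_nonneg_right (hM.dist_le_mul x x') (by positivity)
    _ = M * dist x x' * ‖v‖ * ‖w‖ := by ring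

theorem abs_sub_le_of_abs_sub_le_mul_sq {g : E → ℝ} {A : E →L[ℝ] ℝ} {x₀ z w : E} {K δ ε : ℝ}
    (hK : 0 ≤ K) (hg : |g z - A (z - x₀)| ≤ K * ‖z - x₀‖ ^ 2) (hz : ‖z - x₀‖ ≤ δ)
    (hw : ‖z - x₀ - w‖ ≤ ε) :
    |g z - A w| ≤ K * δ ^ 2 + ‖A‖ * ε := by
  have hAw : |A (z - x₀ - w)| ≤ ‖A‖ * ε :=
    (A.le_opNorm _).trans (mul_le_mul_of_nonneg_left hw (norm_nonneg A))
  have hzδ : K * ‖z - x₀‖ ^ 2 ≤ K * δ ^ 2 :=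
    mul_le_mul_of_nonneg_left (pow_le_pow_left₀ (norm_nonneg _) hz 2) hK
  calc |g z - A w| = |(g z - A (z - x₀)) + A (z - x₀ - w)| := by
        rw [map_sub A (z - x₀) w]; ring_nf
    _ ≤ K * δ ^ 2 + ‖A‖ * ε := (abs_add_le _ _).trans (add_le_add (hg.trans hzδ) hAw)

def lieDeriv (f : E → E) (φ : E → ℝ) (x : E) : ℝ :=
  fderiv ℝ φ x (f x)

theorem hasFDerivAt_lieDeriv {f : E → E} {φ : E → ℝ} {x : E}
    (hφ : DifferentiableAt ℝ (fderiv ℝ φ) x) (hf : DifferentiableAt ℝ f x) :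
    HasFDerivAt (lieDeriv f φ)
      ((fderiv ℝ φ x).comp (fderiv ℝ f x) + (fderiv ℝ (fderiv ℝ φ) x).flip (f x)) x :=
  hφ.hasFDerivAt.clm_apply hf.hasFDerivAt

theorem lieDeriv_lieDeriv {f : E → E} {φ : E → ℝ} {x : E}
    (hφ : DifferentiableAt ℝ (fderiv ℝ φ) x) (hf : DifferentiableAt ℝ f x) (g : E → E) :
    lieDeriv g (lieDeriv f φ) x
      = fderiv ℝ φ x (fderiv ℝ f x (g x)) + fderiv ℝ (fderiv ℝ φ) x (g x) (f x) := by
  rw [lieDeriv, (hasFDerivAt_lieDeriv hφ hf).fderiv]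
  rfl

theorem isBigO_lieDeriv_sub_sub {f : E → E} {φ : E → ℝ} {M : NNReal} (hf : ContDiff ℝ 2 f)
    (hφ : ContDiff ℝ 2 φ) (hM : LipschitzWith M (fderiv ℝ (fderiv ℝ φ))) (x₀ : E) :
    (fun x => lieDeriv f φ x - lieDeriv f φ x₀ - fderiv ℝ (lieDeriv f φ) x₀ (x - x₀))
      =O[𝓝 x₀] fun x => ‖x - x₀‖ ^ 2 := by
  have hDφ : Differentiable ℝ (fderiv ℝ φ) :=
    (hφ.fderiv_right (m := 1) le_rfl).differentiable one_ne_zero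
  have hDf : Differentiable ℝ f := hf.differentiable two_ne_zero
  obtain ⟨K, s, hs, hK⟩ := (hf.fderiv_right (m := 1) le_rfl).contDiffAt.exists_lipschitzOnWith
  have hu := isBigO_sub_sub_fderiv_of_lipschitzOnWith (x₀ := x₀) univ_mem
    (fun x _ => hDφ x) (hM.lipschitzOnWith (s := univ))
  have hv := isBigO_sub_sub_fderiv_of_lipschitzOnWith hs (fun x _ => hDf x) hK
  rw [(hasFDerivAt_lieDeriv (hDφ x₀) (hDf x₀)).fderiv]
  refine (isBigO_clm_apply_sub_sub (hDφ x₀).hasFDerivAt (hDf x₀).hasFDerivAt hu hv).congr_left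
    fun x => ?_
  simp only [lieDeriv, add_apply, ContinuousLinearMap.comp_apply,
    ContinuousLinearMap.flip_apply]
  ring

theorem exists_forall_abs_lieDeriv_sub_le {ι : Type*} [Fintype ι] {X : ι → E → E} {φ : E → ℝ}
    {M : NNReal} (hX : ∀ i, ContDiff ℝ 2 (X i)) (hφ : ContDiff ℝ 2 φ)
    (hM : LipschitzWith M (fderiv ℝ (fderiv ℝ φ))) {x₀ : E} (h₀ : ∀ i, lieDeriv (X i) φ x₀ = 0) :
    ∃ K > 0, ∃ ε > 0, ∀ i, ∀ z ∈ Metric.closedBall x₀ ε,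
      |lieDeriv (X i) φ z - fderiv ℝ (lieDeriv (X i) φ) x₀ (z - x₀)| ≤ K * ‖z - x₀‖ ^ 2 := by
  have hO := isBigO_pi.2 fun i => isBigO_lieDeriv_sub_sub (hX i) hφ hM x₀
  obtain ⟨K, hK, hKO⟩ := hO.exists_pos
  obtain ⟨ε, hε, hball⟩ := Metric.nhds_basis_closedBall.eventually_iff.1 hKO.bound
  refine ⟨K, hK, ε, hε, fun i z hz => ?_⟩
  have hi := (norm_le_pi_norm (fun i => lieDeriv (X i) φ z - lieDeriv (X i) φ x₀
    - fderiv ℝ (lieDeriv (X i) φ) x₀ (z - x₀)) i).trans (hball hz)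
  simpa [h₀] using hi

end Calculus

theorem Sform_eq_sum_lieDeriv {n : ℕ} {f₁ f₂ : Euc n → Euc n} {h : Euc n → ℝ} {x : Euc n}
    (hh : ContDiffAt ℝ 2 h x) (hf₁ : DifferentiableAt ℝ f₁ x) (hf₂ : DifferentiableAt ℝ f₂ x)
    (w : Fin 2 → ℝ) :
    Sform f₁ f₂ h x w
      = ∑ l, ∑ m, lieDeriv (![f₁, f₂] m) (lieDeriv (![f₁, f₂] l) h) x * w l * w m := by
  have hD := (hh.fderiv_right (m := 1) le_rfl).differentiableAt one_ne_zero
  have hsymm := hh.isSymmSndFDerivAt (by simp)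
  have happly : ∀ c v, fderiv ℝ (fun y => fderiv ℝ h y c) x v = fderiv ℝ (fderiv ℝ h) x v c :=
    fun c v => by simp [fderiv_clm_apply hD (differentiableAt_const c)]
  simp only [Sform, Smat, happly, Fin.sum_univ_two, Matrix.cons_val_zero, Matrix.cons_val_one,
    Matrix.cons_val_fin_one, lieDeriv_lieDeriv hD hf₁, lieDeriv_lieDeriv hD hf₂, map_add,
    hsymm (f₂ x) (f₁ x)]
  ring

theorem hasDerivAt_sweptArea {R₁ R₂ : ℝ → ℝ} (h₁ : Continuous R₁) (h₂ : Continuous R₂)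
    (hr₁ : Continuous (deriv R₁)) (hr₂ : Continuous (deriv R₂)) (a σ : ℝ) :
    HasDerivAt (sweptArea R₁ R₂ a) ((1 / 2) * (deriv R₂ σ * R₁ σ - deriv R₁ σ * R₂ σ)) σ :=
  (((hr₂.mul h₁).sub (hr₁.mul h₂)).integral_hasStrictDerivAt a σ).hasDerivAt.const_mul _

def spiralPotential (a : Fin 2 → Fin 2 → ℝ) (R : Fin 2 → ℝ → ℝ) (σ : ℝ) : ℝ :=
  (1 / 2) * ∑ l, ∑ m, a l m * R l σ * R m σ + (a 1 0 - a 0 1) * sweptArea (R 0) (R 1) 0 σ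

theorem hasDerivAt_spiralPotential (a : Fin 2 → Fin 2 → ℝ) {R : Fin 2 → ℝ → ℝ}
    (hR : ∀ l, Differentiable ℝ (R l)) (hr : ∀ l, Continuous (deriv (R l))) (σ : ℝ) :
    HasDerivAt (spiralPotential a R) (∑ l, ∑ m, a l m * deriv (R l) σ * R m σ) σ := by
  have hd : ∀ l, HasDerivAt (R l) (deriv (R l) σ) σ := fun l => (hR l σ).hasDerivAt
  have hQ : HasDerivAt (fun σ => ∑ l, ∑ m, a l m * R l σ * R m σ)
      (∑ l, ∑ m, a l m * (deriv (R l) σ * R m σ + R l σ * deriv (R m) σ)) σ :=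
    HasDerivAt.fun_sum fun l _ => HasDerivAt.fun_sum fun m _ =>
      (((hd l).const_mul (a l m)).mul (hd m)).congr_deriv (by ring)
  have hA := hasDerivAt_sweptArea (hR 0).continuous (hR 1).continuous (hr 0) (hr 1) 0 σ
  refine ((hQ.const_mul (1 / 2)).add (hA.const_mul (a 1 0 - a 0 1))).congr_deriv ?_
  simp only [Fin.sum_univ_two]
  ring

theorem spiralPotential_zero (a : Fin 2 → Fin 2 → ℝ) {R : Fin 2 → ℝ → ℝ} (hR : ∀ l, R l 0 = 0) :
    spiralPotential a R 0 = 0 := by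
  simp [spiralPotential, sweptArea, hR]

theorem hasDerivAt_inv_mul_comp_const_mul {φ : ℝ → ℝ} {φ' ω s : ℝ} (hφ : HasDerivAt φ φ' (ω * s))
    (hω : ω ≠ 0) : HasDerivAt (fun s => ω⁻¹ * φ (ω * s)) φ' s :=
  ((hφ.comp s ((hasDerivAt_id s).const_mul ω)).const_mul ω⁻¹).congr_deriv (by field_simp)

theorem excess_eq_integral {R₁ R₂ : ℝ → ℝ} (hr : ∀ l, Continuous (deriv (![R₁, R₂] l)))
    (σ : ℝ) :
    excess R₁ R₂ σ = ∫ s in (0:ℝ)..σ,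
      (∑ l, ∫ ξ in (0:ℝ)..s, |ξ * deriv (![R₁, R₂] l) ξ|) * ∑ m, |deriv (![R₁, R₂] m) s| := by
  have hG : ∀ l, Continuous fun s => ∫ ξ in (0:ℝ)..s, |ξ * deriv (![R₁, R₂] l) ξ| := fun l =>
    intervalIntegral.continuous_primitive
      (fun a b => ((continuous_id.mul (hr l)).abs).intervalIntegrable a b) 0
  simp only [Finset.sum_mul_sum]
  rw [intervalIntegral.integral_finsetSum fun l _ => ?_]
  · exact Finset.sum_congr rfl fun l _ => (intervalIntegral.integral_finsetSum fun m _ =>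
      ((hG l).mul (hr m).abs).intervalIntegrable 0 σ).symm
  · exact (continuous_finsetSum _ fun m _ => (hG l).mul (hr m).abs).intervalIntegrable 0 σ

theorem cube_div_six_le_excess {R₁ R₂ : ℝ → ℝ} (hr : ∀ l, Continuous (deriv (![R₁, R₂] l)))
    (hspeed : ∀ s, 1 ≤ ∑ m, |deriv (![R₁, R₂] m) s|) {σ : ℝ} (hσ : 0 ≤ σ) :
    σ ^ 3 / 6 ≤ excess R₁ R₂ σ := by
  have hint : ∀ l, Continuous fun ξ => |ξ * deriv (![R₁, R₂] l) ξ| := fun l =>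
    (continuous_id.mul (hr l)).abs
  have hG_ge : ∀ s, 0 ≤ s → s ^ 2 / 2 ≤ ∑ l, ∫ ξ in (0:ℝ)..s, |ξ * deriv (![R₁, R₂] l) ξ| :=
    fun s hs => by
      rw [← intervalIntegral.integral_finsetSum fun l _ => (hint l).intervalIntegrable 0 s,
        ← integral_id.trans (by ring : (s ^ 2 - 0 ^ 2) / 2 = s ^ 2 / 2)]
      refine intervalIntegral.integral_mono_on hs (continuous_id.intervalIntegrable 0 s)
        ((continuous_finsetSum _ fun l _ => hint l).intervalIntegrable 0 s) fun ξ hξ => ?_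
      simp only [abs_mul, ← Finset.mul_sum, abs_of_nonneg hξ.1]
      exact le_mul_of_one_le_right hξ.1 (hspeed ξ)
  calc σ ^ 3 / 6 = ∫ s in (0:ℝ)..σ, s ^ 2 / 2 := by
        rw [intervalIntegral.integral_div, integral_pow]; ring
    _ ≤ excess R₁ R₂ σ := by
        rw [excess_eq_integral hr]
        refine intervalIntegral.integral_mono_on hσ
          (((continuous_pow 2).div_const 2).intervalIntegrable 0 σ) ?_ fun s hs => ?_
        · exact ((continuous_finsetSum _ fun l _ => intervalIntegral.continuous_primitive
            (fun a b => (hint l).intervalIntegrable a b) 0).mul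
            (continuous_finsetSum _ fun m _ => (hr m).abs)).intervalIntegrable 0 σ
        · have hGs := hG_ge s hs.1
          exact hGs.trans (le_mul_of_one_le_right ((by positivity : (0:ℝ) ≤ s ^ 2 / 2).trans hGs)
            (hspeed s))

namespace IsDrop

variable {R₁ R₂ : ℝ → ℝ} {τ₀ : ℝ}

theorem differentiable (hR : IsDrop R₁ R₂ τ₀) (l : Fin 2) : Differentiable ℝ (![R₁, R₂] l) := by
  fin_cases l
  exacts [hR.diff₁, hR.diff₂]

theorem continuous_deriv (hR : IsDrop R₁ R₂ τ₀) (l : Fin 2) :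
    Continuous (deriv (![R₁, R₂] l)) := by
  obtain ⟨_, hL₁, hL₂⟩ := hR.lip
  fin_cases l
  exacts [hL₁.continuous, hL₂.continuous]

theorem apply_zero (hR : IsDrop R₁ R₂ τ₀) (l : Fin 2) : ![R₁, R₂] l 0 = 0 := by
  fin_cases l
  exacts [hR.init₁, hR.init₂]

theorem abs_deriv_le_one (hR : IsDrop R₁ R₂ τ₀) (l : Fin 2) (σ : ℝ) :
    |deriv (![R₁, R₂] l) σ| ≤ 1 := by
  rw [← sq_le_one_iff_abs_le_one]
  fin_cases l
  · exact show deriv R₁ σ ^ 2 ≤ 1 by nlinarith [hR.unit σ, sq_nonneg (deriv R₂ σ)]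
  · exact show deriv R₂ σ ^ 2 ≤ 1 by nlinarith [hR.unit σ, sq_nonneg (deriv R₁ σ)]

theorem one_le_sum_abs_deriv (hR : IsDrop R₁ R₂ τ₀) (σ : ℝ) :
    1 ≤ ∑ m, |deriv (![R₁, R₂] m) σ| := by
  simp only [Fin.sum_univ_two, Matrix.cons_val_zero, Matrix.cons_val_one, Matrix.cons_val_fin_one]
  nlinarith [hR.unit σ, abs_nonneg (deriv R₁ σ), abs_nonneg (deriv R₂ σ), sq_abs (deriv R₁ σ),
    sq_abs (deriv R₂ σ)]

theorem sweptArea_nonneg (hR : IsDrop R₁ R₂ τ₀) {σ : ℝ} (hσ : σ ∈ Icc 0 τ₀) :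
    0 ≤ sweptArea R₁ R₂ 0 σ := by
  have h₀ : sweptArea R₁ R₂ 0 0 = 0 := by simp [sweptArea]
  simpa [h₀] using hR.area_mono.monotoneOn (left_mem_Icc.2 hR.pos.le) hσ hσ.1

theorem exists_cube_le_sweptArea (hR : IsDrop R₁ R₂ τ₀) :
    ∃ C > 0, ∀ σ ∈ Icc 0 τ₀, σ ^ 3 ≤ C * sweptArea R₁ R₂ 0 σ := by
  obtain ⟨C, hC, hexc⟩ := hR.exc_le
  refine ⟨6 * C, by positivity, fun σ hσ => ?_⟩
  have hcube := cube_div_six_le_excess hR.continuous_deriv hR.one_le_sum_abs_deriv hσ.1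
  have hexcσ := hexc σ hσ
  rw [abs_of_nonneg (hR.sweptArea_nonneg hσ)] at hexcσ
  linarith

end IsDrop

section ControlledTrajectory

variable {E : Type*} [NormedAddCommGroup E] [NormedSpace ℝ E]
  {X : Fin 2 → E → E} {R : Fin 2 → ℝ → ℝ} {y : ℝ → E} {x₀ : E} {ω τ k₀ : ℝ}

theorem norm_sub_le_of_controlled (hr : ∀ l σ, |deriv (R l) σ| ≤ 1)
    (hX : ∀ z, ∑ l, ‖X l z‖ ≤ k₀) (hy₀ : y 0 = x₀)
    (hy : ∀ s ∈ Icc 0 τ, HasDerivAt y (∑ l, deriv (R l) (ω * s) • X l (y s)) s) :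
    ∀ s ∈ Icc 0 τ, ‖y s - x₀‖ ≤ k₀ * s := by
  simpa using norm_le_of_norm_deriv_le_mul_pow (k := 0) (f := fun s => y s - x₀)
    (by simp [hy₀]) (fun s hs => (hy s hs).sub_const x₀)
    (fun s _ => by simpa using (norm_sum_smul_le_of_abs_le_one (fun l => hr l _) _).trans (hX _))

theorem norm_sub_sub_le_of_controlled {kf : NNReal} (hω : ω ≠ 0)
    (hR : ∀ l, Differentiable ℝ (R l)) (hR₀ : ∀ l, R l 0 = 0) (hr : ∀ l σ, |deriv (R l) σ| ≤ 1)
    (hX : ∀ z, ∑ l, ‖X l z‖ ≤ k₀) (hXL : ∀ l, LipschitzWith kf (X l)) (hy₀ : y 0 = x₀)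
    (hy : ∀ s ∈ Icc 0 τ, HasDerivAt y (∑ l, deriv (R l) (ω * s) • X l (y s)) s) :
    ∀ s ∈ Icc 0 τ, ‖y s - x₀ - ∑ m, (ω⁻¹ * R m (ω * s)) • X m x₀‖ ≤ kf * k₀ * s ^ 2 := by
  have hnear := norm_sub_le_of_controlled hr hX hy₀ hy
  have hder : ∀ s ∈ Icc 0 τ, HasDerivAt (fun s => y s - x₀ - ∑ m, (ω⁻¹ * R m (ω * s)) • X m x₀)
      (∑ m, deriv (R m) (ω * s) • (X m (y s) - X m x₀)) s := fun s hs =>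
    (((hy s hs).sub_const x₀).sub (HasDerivAt.fun_sum fun m _ =>
      (hasDerivAt_inv_mul_comp_const_mul (hR m _).hasDerivAt hω).smul_const (X m x₀))).congr_deriv
      (by simp [smul_sub, Finset.sum_sub_distrib])
  have hbound : ∀ s ∈ Icc 0 τ, ‖∑ m, deriv (R m) (ω * s) • (X m (y s) - X m x₀)‖
      ≤ 2 * kf * k₀ * s ^ 1 := fun s hs => by
    refine (norm_sum_smul_le_of_abs_le_one (fun m => hr m _) _).trans ?_
    calc ∑ m, ‖X m (y s) - X m x₀‖ ≤ ∑ _m : Fin 2, kf * (k₀ * s) :=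
          Finset.sum_le_sum fun m _ => by
            rw [← dist_eq_norm]
            exact ((hXL m).dist_le_mul _ _).trans
              (mul_le_mul_of_nonneg_left ((dist_eq_norm _ _).trans_le (hnear s hs)) kf.coe_nonneg)
      _ = 2 * kf * k₀ * s ^ 1 := by simp; ring
  intro s hs
  have := norm_le_of_norm_deriv_le_mul_pow (by simp [hy₀, hR₀]) hder hbound s hs
  convert this using 1
  push_cast
  ring

theorem hasDerivAt_comp_sub_spiralPotential {h : E → ℝ} {A : Fin 2 → E →L[ℝ] ℝ} (hω : ω ≠ 0)
    (hR : ∀ l, Differentiable ℝ (R l)) (hr : ∀ l, Continuous (deriv (R l)))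
    (hh : Differentiable ℝ h)
    (hy : ∀ s ∈ Icc 0 τ, HasDerivAt y (∑ l, deriv (R l) (ω * s) • X l (y s)) s) :
    ∀ s ∈ Icc 0 τ, HasDerivAt
      (fun s => h (y s) - h x₀ - (ω ^ 2)⁻¹ * spiralPotential (fun l m => A l (X m x₀)) R (ω * s))
      (∑ l, deriv (R l) (ω * s) •
        (lieDeriv (X l) h (y s) - A l (∑ m, (ω⁻¹ * R m (ω * s)) • X m x₀))) s := fun s hs => by
  have hhy := (hh (y s)).hasFDerivAt.comp_hasDerivAt s (hy s hs)
  have hΦ := ((hasDerivAt_spiralPotential (fun l m => A l (X m x₀)) hR hr (ω * s)).comp s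
    ((hasDerivAt_id s).const_mul ω)).const_mul (ω ^ 2)⁻¹
  refine ((hhy.sub_const (h x₀)).sub hΦ).congr_deriv ?_
  simp only [lieDeriv, Fin.sum_univ_two, map_add, map_smul, smul_eq_mul]
  field_simp
  ring

theorem abs_sub_sub_spiralPotential_le {h : E → ℝ} {A : Fin 2 → E →L[ℝ] ℝ} {K : ℝ} {kf : NNReal}
    (hω : 0 < ω) (hR : ∀ l, Differentiable ℝ (R l)) (hr' : ∀ l, Continuous (deriv (R l)))
    (hR₀ : ∀ l, R l 0 = 0) (hr : ∀ l σ, |deriv (R l) σ| ≤ 1) (hX : ∀ z, ∑ l, ‖X l z‖ ≤ k₀)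
    (hXL : ∀ l, LipschitzWith kf (X l)) (hh : Differentiable ℝ h) (hK : 0 ≤ K)
    (hA : ∀ l, ∀ z ∈ Metric.closedBall x₀ (k₀ * τ),
      |lieDeriv (X l) h z - A l (z - x₀)| ≤ K * ‖z - x₀‖ ^ 2)
    (hy₀ : y 0 = x₀) (hy : ∀ s ∈ Icc 0 τ, HasDerivAt y (∑ l, deriv (R l) (ω * s) • X l (y s)) s) :
    ∀ t ∈ Icc 0 τ,
      |h (y t) - h x₀ - (ω ^ 2)⁻¹ * spiralPotential (fun l m => A l (X m x₀)) R (ω * t)|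
        ≤ (∑ l, (K * k₀ ^ 2 + ‖A l‖ * (kf * k₀))) * t ^ 3 / 3 := by
  have hnear := norm_sub_le_of_controlled hr hX hy₀ hy
  have hfirst := norm_sub_sub_le_of_controlled hω.ne' hR hR₀ hr hX hXL hy₀ hy
  have hk₀ : 0 ≤ k₀ := (Finset.sum_nonneg fun l _ => norm_nonneg _).trans (hX x₀)
  have hbound : ∀ s ∈ Icc 0 τ, ‖∑ l, deriv (R l) (ω * s) •
      (lieDeriv (X l) h (y s) - A l (∑ m, (ω⁻¹ * R m (ω * s)) • X m x₀))‖
      ≤ (∑ l, (K * k₀ ^ 2 + ‖A l‖ * (kf * k₀))) * s ^ 2 := fun s hs => by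
    refine (norm_sum_smul_le_of_abs_le_one (fun l => hr l _) _).trans ?_
    rw [Finset.sum_mul]
    refine Finset.sum_le_sum fun l _ => ?_
    have hmem : y s ∈ Metric.closedBall x₀ (k₀ * τ) := mem_closedBall_iff_norm.2
      ((hnear s hs).trans (mul_le_mul_of_nonneg_left hs.2 hk₀))
    rw [Real.norm_eq_abs]
    exact (abs_sub_le_of_abs_sub_le_mul_sq hK (hA l _ hmem) (hnear s hs) (hfirst s hs)).trans_eq
      (by ring)
  intro t ht
  have := norm_le_of_norm_deriv_le_mul_pow (by simp [hy₀, spiralPotential_zero _ hR₀])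
    (hasDerivAt_comp_sub_spiralPotential hω.ne' hR hr' hh hy) hbound t ht
  rw [Real.norm_eq_abs] at this
  convert this using 2
  norm_num

end ControlledTrajectory

theorem spiralPotential_lieDeriv {n : ℕ} {f₁ f₂ : Euc n → Euc n} {h : Euc n → ℝ} {x : Euc n}
    (hh : ContDiffAt ℝ 2 h x) (hf₁ : DifferentiableAt ℝ f₁ x) (hf₂ : DifferentiableAt ℝ f₂ x)
    (R₁ R₂ : ℝ → ℝ) (σ : ℝ) :
    spiralPotential (fun l m => fderiv ℝ (lieDeriv (![f₁, f₂] l) h) x (![f₁, f₂] m x)) ![R₁, R₂] σ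
      = (1 / 2) * Sform f₁ f₂ h x ![R₁ σ, R₂ σ]
        + fderiv ℝ h x (lieBracket f₁ f₂ x) * sweptArea R₁ R₂ 0 σ := by
  have hbracket : fderiv ℝ h x (lieBracket f₁ f₂ x)
      = lieDeriv f₁ (lieDeriv f₂ h) x - lieDeriv f₂ (lieDeriv f₁ h) x :=
    VectorField.fderiv_apply_lieBracket hh (by simp) hf₂ hf₁
  rw [spiralPotential, Sform_eq_sum_lieDeriv hh hf₁ hf₂, hbracket]
  simp [Fin.sum_univ_two, lieDeriv]

theorem exists_sub_le_Sform_add_sweptArea_add_cube {n : ℕ} {f₁ f₂ : Euc n → Euc n} {h : Euc n → ℝ}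
    {x₀ : Euc n} {R₁ R₂ : ℝ → ℝ} {τ₀ : ℝ} (h1 : H1 f₁ f₂) (h3 : H3 h)
    (hx₀ : x₀ ∈ singSet f₁ f₂ h) (hdrop : IsDrop R₁ R₂ τ₀) :
    ∃ T > 0, ∃ K ≥ 0, ∀ ω > 0, ∀ τ ≤ T, ∀ y : ℝ → Euc n, y 0 = x₀ →
      (∀ t ∈ Icc 0 τ,
        HasDerivAt y (deriv R₁ (ω * t) • f₁ (y t) + deriv R₂ (ω * t) • f₂ (y t)) t) →
      ∀ t ∈ Icc 0 τ, h (y t) - h x₀ ≤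
        (ω ^ 2)⁻¹ * ((1 / 2) * Sform f₁ f₂ h x₀ ![R₁ (ω * t), R₂ (ω * t)]
          + fderiv ℝ h x₀ (lieBracket f₁ f₂ x₀) * sweptArea R₁ R₂ 0 (ω * t)) + K * t ^ 3 := by
  obtain ⟨hf₁, hf₂, ⟨kf, hkf₁, hkf₂⟩, k₀, hk₀⟩ := h1
  obtain ⟨hh, ⟨M, hM⟩, -⟩ := h3
  have hf : ∀ l, ContDiff ℝ 2 (![f₁, f₂] l) := by intro l; fin_cases l; exacts [hf₁, hf₂]
  have hfL : ∀ l, LipschitzWith kf (![f₁, f₂] l) := by intro l; fin_cases l; exacts [hkf₁, hkf₂]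
  obtain ⟨K, hK, ε, hε, htaylor⟩ := exists_forall_abs_lieDeriv_sub_le hf hh
    (lipschitzWith_fderiv_fderiv_of_iteratedFDeriv_two hM)
    (by intro l; fin_cases l; exacts [hx₀.2.1, hx₀.2.2])
  have hk₀_nonneg : 0 ≤ k₀ := (add_nonneg (norm_nonneg _) (norm_nonneg _)).trans (hk₀ x₀)
  refine ⟨ε / (k₀ + 1), by positivity,
    (∑ l, (K * k₀ ^ 2 + ‖fderiv ℝ (lieDeriv (![f₁, f₂] l) h) x₀‖ * (kf * k₀))) / 3, by positivity,
    fun ω hω τ hτ y hy₀ hy t ht => ?_⟩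
  have hk₀τ : k₀ * τ ≤ ε := by
    rw [le_div_iff₀ (by positivity)] at hτ
    nlinarith
  have herr := abs_sub_sub_spiralPotential_le hω hdrop.differentiable hdrop.continuous_deriv
    hdrop.apply_zero hdrop.abs_deriv_le_one (by simpa [Fin.sum_univ_two] using hk₀) hfL
    (hh.differentiable two_ne_zero) hK.le
    (fun l z hz => htaylor l z (Metric.closedBall_subset_closedBall hk₀τ hz)) hy₀
    (by simpa [Fin.sum_univ_two] using hy) t ht
  rw [spiralPotential_lieDeriv hh.contDiffAt (hf₁.differentiable two_ne_zero x₀)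
    (hf₂.differentiable two_ne_zero x₀)] at herr
  linarith [(abs_le.1 herr).2]

theorem spiral_estimate_at_singular_point_general {n : ℕ}
    (f₁ f₂ : Euc n → Euc n) (h : Euc n → ℝ)
    (h1 : H1 f₁ f₂) (h3 : H3 h)
    (x₀ : Euc n) (hx₀ : x₀ ∈ singSet f₁ f₂ h)
    (hbr : fderiv ℝ h x₀ (lieBracket f₁ f₂ x₀) < 0)
    (R₁ R₂ : ℝ → ℝ) (τ₀ : ℝ) (hdrop : IsDrop R₁ R₂ τ₀)
    (hS : ∀ t : ℝ, Sform f₁ f₂ h x₀ ![R₁ t, R₂ t] ≤ 0) :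
    ∃ τbar > 0, ∀ τ ∈ Set.Ioo (0:ℝ) τbar,
      ∀ y : ℝ → Euc n, y 0 = x₀ →
        (∀ t ∈ Set.Icc 0 τ,
          HasDerivAt y
            (deriv R₁ ((τ₀ / τ) * t) • f₁ (y t)
              + deriv R₂ ((τ₀ / τ) * t) • f₂ (y t)) t) →
        ∀ t ∈ Set.Icc 0 τ,
          h (y t) - h x₀ ≤
            (1 / 2) * fderiv ℝ h x₀ (lieBracket f₁ f₂ x₀) * (1 / (τ₀ / τ) ^ 2) *
              sweptArea R₁ R₂ 0 ((τ₀ / τ) * t) := by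
  obtain ⟨T, hT, K, hK, hexpand⟩ := exists_sub_le_Sform_add_sweptArea_add_cube h1 h3 hx₀ hdrop
  obtain ⟨C, hC, hcube⟩ := hdrop.exists_cube_le_sweptArea
  set β := fderiv ℝ h x₀ (lieBracket f₁ f₂ x₀)
  refine ⟨min T (-β * τ₀ / (2 * C * (K + 1))),
    lt_min hT (div_pos (mul_pos (neg_pos.2 hbr) hdrop.pos) (by positivity)), ?_⟩
  rintro τ ⟨hτ, hτbar⟩ y hy₀ hy t ht
  set ω := τ₀ / τ
  have hω : 0 < ω := div_pos hdrop.pos hτ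
  have hCK : 2 * C * K ≤ -β * ω := by
    have := (lt_div_iff₀ (by positivity)).1 (hτbar.trans_le (min_le_right _ _))
    rw [mul_div_assoc', le_div_iff₀ hτ]
    nlinarith
  have hωt : ω * t ∈ Icc 0 τ₀ :=
    ⟨by nlinarith [ht.1], by rw [div_mul_eq_mul_div, div_le_iff₀ hτ]; nlinarith [ht.2, hdrop.pos]⟩
  have hexp := hexpand ω hω τ (hτbar.le.trans (min_le_left _ _)) y hy₀ hy t ht
  have hcubic : K * t ^ 3 ≤ -β / 2 * (ω ^ 2)⁻¹ * sweptArea R₁ R₂ 0 (ω * t) := by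
    rw [← mul_le_mul_iff_of_pos_left hC]
    calc C * (K * t ^ 3) ≤ -β / 2 * ω * t ^ 3 := by nlinarith [pow_nonneg ht.1 3]
      _ = -β / 2 * (ω ^ 2)⁻¹ * (ω * t) ^ 3 := by field_simp
      _ ≤ -β / 2 * (ω ^ 2)⁻¹ * (C * sweptArea R₁ R₂ 0 (ω * t)) :=
          mul_le_mul_of_nonneg_left (hcube _ hωt) (by have := neg_pos.2 hbr; positivity)
      _ = C * (-β / 2 * (ω ^ 2)⁻¹ * sweptArea R₁ R₂ 0 (ω * t)) := by ring
  have hSneg := mul_nonpos_of_nonneg_of_nonpos (by positivity : 0 ≤ (ω ^ 2)⁻¹) (hS (ω * t))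
  rw [one_div (ω ^ 2)]
  linarith

/-- **Proposition (estimate of `h` along a spiraling trajectory at a singular point).**
Assume (H1)–(H5), let `x₀ ∈ 𝕊` with `∇h(x₀)·[f₁,f₂](x₀) < 0`, and let `r = R'` be a drop
generator of period `τ₀` with `𝐒(x₀)(R(t)) ≤ 0` for all `t`. Then there is `τ̄ > 0` such
that for all `τ ∈ (0, τ̄)`, with `ω = τ₀/τ`, the solution `y` of
`ẏ = r¹(ωt) f₁(y) + r²(ωt) f₂(y)`, `y(0) = x₀`, satisfies
`h(y(t)) − h(x₀) ≤ ½ ∇h(x₀)·[f₁,f₂](x₀) · ω⁻² · Area(R)|₀^{ωt}` on `[0, τ]`. -/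
theorem spiral_estimate_at_singular_point {n : ℕ}
    (f₁ f₂ : Euc n → Euc n) (h : Euc n → ℝ)
    (h1 : H1 f₁ f₂) (h3 : H3 h) (h4 : H4 f₁ f₂ h) (h5 : H5 f₁ f₂ h)
    (x₀ : Euc n) (hx₀ : x₀ ∈ singSet f₁ f₂ h)
    (hbr : fderiv ℝ h x₀ (lieBracket f₁ f₂ x₀) < 0)
    (R₁ R₂ : ℝ → ℝ) (τ₀ : ℝ) (hdrop : IsDrop R₁ R₂ τ₀)
    (hS : ∀ t : ℝ, Sform f₁ f₂ h x₀ ![R₁ t, R₂ t] ≤ 0) :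
    ∃ τbar > 0, ∀ τ ∈ Set.Ioo (0:ℝ) τbar,
      ∀ y : ℝ → Euc n, y 0 = x₀ →
        (∀ t ∈ Set.Icc 0 τ,
          HasDerivAt y
            (deriv R₁ ((τ₀ / τ) * t) • f₁ (y t)
              + deriv R₂ ((τ₀ / τ) * t) • f₂ (y t)) t) →
        ∀ t ∈ Set.Icc 0 τ,
          h (y t) - h x₀ ≤
            (1 / 2) * fderiv ℝ h x₀ (lieBracket f₁ f₂ x₀) * (1 / (τ₀ / τ) ^ 2) *
              sweptArea R₁ R₂ 0 ((τ₀ / τ) * t) :=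
  spiral_estimate_at_singular_point_general f₁ f₂ h h1 h3 x₀ hx₀ hbr R₁ R₂ τ₀ hdrop hS

end
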